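/- Compatible function approximation preserves the policy gradient: suppose w* minimizes the weighted mean squared error e(w) = ∑_x d(x) ∑_a π(x,a) [Q(x,a) − f_w(x,a)]², where f_w(x,a) = w · ψ(x,a) is linear in w with compatibility features ψ(x,a) = (∂π(x,a)/∂θ)/π(x,a) (assuming π(x,a) > 0). Then ∑_x d(x) ∑_a (∂π(x,a)/∂θ) Q(x,a) = ∑_x d(x) ∑_a (∂π(x,a)/∂θ) f_{w*}(x,a). -/
import Mathlib

/-- Compatible function approximation preserves the policy gradient:
if `w*` satisfies the first-order condition for minimizing the weighted MSE with
compatibility features `ψ(x,a) = g x a / π x a` and `f_w(x,a) = w * ψ x a`, then the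
policy gradient computed with `Q` equals that computed with `f_{w*}`. -/
theorem compatible_function_approximation (X A : Type*) [Fintype X] [Nonempty X]
    [Fintype A] [Nonempty A]
    (d : X → ℝ) (hd : ∀ x, 0 ≤ d x)
    (π : X → A → ℝ) (hπ : ∀ x a, 0 < π x a)
    (Q : X → A → ℝ) (g : X → A → ℝ) (wstar : ℝ)
    (hfoc : ∑ x, d x * ∑ a, π x a *
        ((Q x a - wstar * (g x a / π x a)) * (g x a / π x a)) = 0) :
    ∑ x, d x * ∑ a, g x a * Q x a =
      ∑ x, d x * ∑ a, g x a * (wstar * (g x a / π x a)) := by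
  have key : ∀ x a, π x a * ((Q x a - wstar * (g x a / π x a)) * (g x a / π x a))
      = g x a * Q x a - g x a * (wstar * (g x a / π x a)) := by
    intro x a
    have h := (hπ x a).ne'
    field_simp
  rw [← sub_eq_zero, ← Finset.sum_sub_distrib]
  simp_rw [← mul_sub, ← Finset.sum_sub_distrib, ← key]
  exact hfoc
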